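/- arXiv:1703.01157 — 6 statements merged into one kernel-verified Lean document; each statement's English description precedes it below -/
import Mathlib

section
/- Let n ≥ 1, let Ω ⊂ ℝⁿ be a bounded open set, let φ : ℝⁿ → ℝ be a nonnegative Lipschitz function with compact support contained in Ω, and let γ > 0. Then there exists u* ∈ K_∞ such that Lip(u*) ≤ Lip(v) for every v ∈ K_∞; that is, the problem of minimizing the Lipschitz constant over K_∞ admits a minimizer. -/
/-!
Let `M` be the infimum of `Lip v` over `K_∞`. The candidate minimizer is McShane's
`u(x) = sup_y (φ y - M ‖x - y‖)`, the least `M`-Lipschitz function above `φ`. For `c > M` some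
`c`-Lipschitz `v ∈ K_∞` exists, and `v` lies above the analogous function at `c`, so the positivity
set of the latter is outside `Ω` of measure at most `γ`. As `c ↓ M` these positivity sets increase
to that of `u`, and continuity of the measure from below puts `u` in `K_∞`.
-/

open MeasureTheory Set Filter Topology
open scoped NNReal ENNReal

section LipschitzConstant

variable {α β : Type*} [PseudoMetricSpace α] [PseudoMetricSpace β] {f : α → β} {K : ℝ≥0}

/-- The best Lipschitz constant of `f`; it is the junk value `0` when `f` is not Lipschitz. -/
noncomputable def lipschitzConstant (f : α → β) : ℝ≥0 :=
  sInf {L | LipschitzWith L f}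

theorem lipschitzConstant_le (hf : LipschitzWith K f) : lipschitzConstant f ≤ K :=
  csInf_le (OrderBot.bddBelow _) hf

theorem LipschitzWith.lipschitzWith_lipschitzConstant (hf : LipschitzWith K f) :
    LipschitzWith (lipschitzConstant f) f := by
  have hclosed : IsClosed {L : ℝ≥0 | LipschitzWith L f} := by
    simp only [lipschitzWith_iff_dist_le_mul, ofPred_forall]
    exact isClosed_iInter fun x => isClosed_iInter fun y =>
      isClosed_le continuous_const (NNReal.continuous_coe.mul continuous_const)
  exact hclosed.csInf_mem ⟨K, hf⟩ (OrderBot.bddBelow _)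

end LipschitzConstant

section LipschitzMajorant

variable {α : Type*} [PseudoMetricSpace α] {φ : α → ℝ}

noncomputable def lipschitzMajorant (φ : α → ℝ) (c : ℝ≥0) (x : α) : ℝ :=
  ⨆ y, φ y - c * dist x y

theorem bddAbove_range_sub_mul_dist (hφ : BddAbove (range φ)) (c : ℝ≥0) (x : α) :
    BddAbove (range fun y => φ y - c * dist x y) := by
  obtain ⟨C, hC⟩ := hφ
  refine ⟨C, forall_mem_range.2 fun y => ?_⟩
  have : (0 : ℝ) ≤ c * dist x y := by positivity
  linarith [hC (mem_range_self y)]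

theorem le_lipschitzMajorant (hφ : BddAbove (range φ)) (c : ℝ≥0) (x : α) :
    φ x ≤ lipschitzMajorant φ c x := by
  simpa [lipschitzMajorant] using le_ciSup (bddAbove_range_sub_mul_dist hφ c x) x

theorem lipschitzWith_lipschitzMajorant (hφ : BddAbove (range φ)) (c : ℝ≥0) :
    LipschitzWith c (lipschitzMajorant φ c) := by
  refine LipschitzWith.of_le_add_mul c fun x y => ?_
  have : Nonempty α := ⟨x⟩
  refine ciSup_le fun z => ?_
  calc φ z - c * dist x z
      ≤ (φ z - c * dist y z) + c * dist x y := by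
        have : (c : ℝ) * dist y z ≤ c * (dist x y + dist x z) := by
          gcongr
          exact dist_triangle_left y z x
        linarith
    _ ≤ lipschitzMajorant φ c y + c * dist x y := by
        gcongr
        exact le_ciSup (bddAbove_range_sub_mul_dist hφ c y) z

theorem lipschitzMajorant_le {v : α → ℝ} {c : ℝ≥0} (hv : LipschitzWith c v)
    (hφv : ∀ x, φ x ≤ v x) (x : α) : lipschitzMajorant φ c x ≤ v x := by
  have : Nonempty α := ⟨x⟩
  refine ciSup_le fun y => ?_
  rw [dist_comm]
  linarith [hφv y, hv.le_add_mul y x]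

theorem lipschitzMajorant_antitone (hφ : BddAbove (range φ)) :
    Antitone (lipschitzMajorant φ) := fun c c' hcc' x =>
  ciSup_mono (bddAbove_range_sub_mul_dist hφ c x) fun y => by
    have : (c : ℝ) * dist x y ≤ c' * dist x y := by gcongr
    linarith

theorem lipschitzMajorant_pos_iff (hφ : BddAbove (range φ)) {c : ℝ≥0} {x : α} :
    0 < lipschitzMajorant φ c x ↔ ∃ y, c * dist x y < φ y := by
  have : Nonempty α := ⟨x⟩
  simp only [lipschitzMajorant, lt_ciSup_iff (bddAbove_range_sub_mul_dist hφ c x), sub_pos]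

theorem eventually_lipschitzMajorant_pos (hφ : BddAbove (range φ)) {c : ℝ≥0} {x : α}
    (hx : 0 < lipschitzMajorant φ c x) : ∀ᶠ c' in 𝓝 c, 0 < lipschitzMajorant φ c' x := by
  obtain ⟨y, hy⟩ := (lipschitzMajorant_pos_iff hφ).1 hx
  have hcont : Continuous fun c' : ℝ≥0 => (c' : ℝ) * dist x y :=
    NNReal.continuous_coe.mul continuous_const
  filter_upwards [hcont.continuousAt.eventually_lt continuousAt_const hy] with c' hc'
  exact (lipschitzMajorant_pos_iff hφ).2 ⟨y, hc'⟩

theorem setOf_lipschitzMajorant_pos_eq_iUnion (hφ : BddAbove (range φ)) {c : ℝ≥0}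
    {u : ℕ → ℝ≥0} (hcu : ∀ n, c ≤ u n) (hu : Tendsto u atTop (𝓝 c)) :
    {x | 0 < lipschitzMajorant φ c x} = ⋃ n, {x | 0 < lipschitzMajorant φ (u n) x} := by
  refine Subset.antisymm (fun x hx => ?_) (iUnion_subset fun n x hx => ?_)
  · exact mem_iUnion.2 (hu.eventually (eventually_lipschitzMajorant_pos hφ hx)).exists
  · exact hx.trans_le (lipschitzMajorant_antitone hφ (hcu n) x)

end LipschitzMajorant

section LipschitzAdmissible

variable {α : Type*} [PseudoMetricSpace α] [MeasurableSpace α] (μ : Measure α) (φ : α → ℝ)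
  (Ω : Set α) (γ : ℝ≥0∞)

/-- The admissible class `K_∞`. -/
def lipschitzAdmissible : Set (α → ℝ) :=
  {w | (∃ L : ℝ≥0, LipschitzWith L w) ∧ (∀ x, φ x ≤ w x) ∧ μ ({x | 0 < w x} \ Ω) ≤ γ}

variable {μ φ Ω γ}

theorem lipschitzMajorant_mem_lipschitzAdmissible (hφ : BddAbove (range φ)) {c : ℝ≥0}
    (hv : ∀ c' > c, ∃ v ∈ lipschitzAdmissible μ φ Ω γ, LipschitzWith c' v) :
    lipschitzMajorant φ c ∈ lipschitzAdmissible μ φ Ω γ := by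
  refine ⟨⟨c, lipschitzWith_lipschitzMajorant hφ c⟩, le_lipschitzMajorant hφ c, ?_⟩
  obtain ⟨u, hu_anti, hcu, hu⟩ := exists_seq_strictAnti_tendsto c
  choose v hv_mem hv_lip using fun n => hv (u n) (hcu n)
  have hmono : Monotone fun n => {x | 0 < lipschitzMajorant φ (u n) x} \ Ω := fun m n hmn =>
    sdiff_subset_sdiff_left fun x hx =>
      hx.trans_le (lipschitzMajorant_antitone hφ (hu_anti.antitone hmn) x)
  rw [setOf_lipschitzMajorant_pos_eq_iUnion hφ (fun n => (hcu n).le) hu, iUnion_sdiff,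
    hmono.measure_iUnion]
  refine iSup_le fun n => (measure_mono (sdiff_subset_sdiff_left fun x hx => ?_)).trans
    (hv_mem n).2.2
  exact hx.trans_le (lipschitzMajorant_le (hv_lip n) (hv_mem n).2.1 x)

theorem exists_lipschitzConstant_minimizer (hφ : BddAbove (range φ))
    (hne : (lipschitzAdmissible μ φ Ω γ).Nonempty) :
    ∃ u ∈ lipschitzAdmissible μ φ Ω γ,
      ∀ v ∈ lipschitzAdmissible μ φ Ω γ, lipschitzConstant u ≤ lipschitzConstant v := by
  set M := sInf (lipschitzConstant '' lipschitzAdmissible μ φ Ω γ)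
  have hnear : ∀ c > M, ∃ v ∈ lipschitzAdmissible μ φ Ω γ, LipschitzWith c v := by
    intro c hc
    obtain ⟨_, ⟨v, hv, rfl⟩, hlt⟩ := exists_lt_of_csInf_lt (hne.image _) hc
    obtain ⟨L, hL⟩ := hv.1
    exact ⟨v, hv, hL.lipschitzWith_lipschitzConstant.weaken hlt.le⟩
  refine ⟨lipschitzMajorant φ M, lipschitzMajorant_mem_lipschitzAdmissible hφ hnear,
    fun v hv => ?_⟩
  exact (lipschitzConstant_le (lipschitzWith_lipschitzMajorant hφ M)).trans
    (csInf_le (OrderBot.bddBelow _) (mem_image_of_mem _ hv))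

end LipschitzAdmissible

theorem exists_lipschitz_minimizer_general
    (n : ℕ)
    (Ω : Set (EuclideanSpace ℝ (Fin n)))
    (φ : EuclideanSpace ℝ (Fin n) → ℝ) (Lφ : NNReal) (hφlip : LipschitzWith Lφ φ)
    (hφsupp : HasCompactSupport φ) (hφΩ : tsupport φ ⊆ Ω)
    (γ : ℝ) :
    ∃ u ∈ {w : EuclideanSpace ℝ (Fin n) → ℝ |
        (∃ L : NNReal, LipschitzWith L w) ∧ (∀ x, φ x ≤ w x) ∧
        volume ({x | 0 < w x} \ Ω) ≤ ENNReal.ofReal γ},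
      ∀ v ∈ {w : EuclideanSpace ℝ (Fin n) → ℝ |
        (∃ L : NNReal, LipschitzWith L w) ∧ (∀ x, φ x ≤ w x) ∧
        volume ({x | 0 < w x} \ Ω) ≤ ENNReal.ofReal γ},
      sInf {L : NNReal | LipschitzWith L u} ≤ sInf {L : NNReal | LipschitzWith L v} := by
  have hφ_bdd : BddAbove (range φ) := hφlip.continuous.bddAbove_range_of_hasCompactSupport hφsupp
  have hφ_pos : {x | 0 < φ x} \ Ω = ∅ :=
    sdiff_eq_empty.2 fun x hx => hφΩ (subset_tsupport φ hx.ne')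
  exact exists_lipschitzConstant_minimizer hφ_bdd
    ⟨φ, ⟨Lφ, hφlip⟩, fun _ => le_rfl, by simp [hφ_pos]⟩

/-- Existence of a minimizer of the Lipschitz constant over
`K_∞ = {u Lipschitz | u ≥ φ, |{u>0} \ Ω| ≤ γ}`. -/
theorem exists_lipschitz_minimizer
    (n : ℕ) (hn : 1 ≤ n)
    (Ω : Set (EuclideanSpace ℝ (Fin n))) (hΩopen : IsOpen Ω)
    (hΩbdd : Bornology.IsBounded Ω)
    (φ : EuclideanSpace ℝ (Fin n) → ℝ) (Lφ : NNReal) (hφlip : LipschitzWith Lφ φ)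
    (hφ0 : ∀ x, 0 ≤ φ x) (hφsupp : HasCompactSupport φ) (hφΩ : tsupport φ ⊆ Ω)
    (γ : ℝ) (hγ : 0 < γ) :
    ∃ u ∈ {w : EuclideanSpace ℝ (Fin n) → ℝ |
        (∃ L : NNReal, LipschitzWith L w) ∧ (∀ x, φ x ≤ w x) ∧
        volume ({x | 0 < w x} \ Ω) ≤ ENNReal.ofReal γ},
      ∀ v ∈ {w : EuclideanSpace ℝ (Fin n) → ℝ |
        (∃ L : NNReal, LipschitzWith L w) ∧ (∀ x, φ x ≤ w x) ∧
        volume ({x | 0 < w x} \ Ω) ≤ ENNReal.ofReal γ},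
      sInf {L : NNReal | LipschitzWith L u} ≤ sInf {L : NNReal | LipschitzWith L v} :=
  exists_lipschitz_minimizer_general n Ω φ Lφ hφlip hφsupp hφΩ γ
end

section
/- Let u and (u_k)_{k∈ℕ} be continuous nonnegative functions on ℝⁿ with u_k → u uniformly on ℝⁿ, and let θ > 0. Assume that ∂{u>0} and every ∂{u_k>0} are nonempty, that u and every u_k have linear growth away from the free boundary with constant θ, and that u and every u_k are strongly non-degenerate with constant θ. Then the free boundaries converge in the Hausdorff sense: for every ε > 0 there exists N such that for all k ≥ N one has ∂{u_k>0} ⊆ Γ_ε(∂{u>0}) and ∂{u>0} ⊆ Γ_ε(∂{u_k>0}). -/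
open Metric Filter

/-!
If a free boundary point `x₀` of `w` were at distance at least `ε` from `∂{v > 0}`, the ball
`B_ε(x₀)` would be a connected set missing `∂{v > 0}`, hence contained in `{v > 0}` or in
`{v ≤ 0}`. In the first case linear growth gives `v > θε/2` at a point of `B_{ε/2}(x₀)` where
`w ≤ 0`; in the second, `w ≤ v + θε/2 ≤ θε/2` on `B_{3ε/4}(x₀)`, against non-degeneracy.
So once `|v - w| ≤ θε/2` everywhere, each free boundary lies in the `ε`-neighbourhood of the
other, and uniform convergence applies this to `u` and `u_k` in both directions.
-/

theorem IsPreconnected.subset_or_subset_compl_of_disjoint_frontier {X : Type*}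
    [TopologicalSpace X] {s t : Set X} (hs : IsPreconnected s) (hst : Disjoint s (frontier t)) :
    s ⊆ t ∨ s ⊆ tᶜ := by
  have hcover : s ⊆ interior t ∪ interior tᶜ := by
    rw [← compl_frontier_eq_union_interior]
    exact hst.subset_compl_right
  have hdisj : Disjoint (interior t) (interior tᶜ) :=
    disjoint_compl_right.mono interior_subset interior_subset
  exact (hs.subset_or_subset isOpen_interior isOpen_interior hdisj hcover).imp
    (·.trans interior_subset) (·.trans interior_subset)

section FreeBoundary

variable {E : Type*} [PseudoMetricSpace E]

def HasLinearGrowth (θ : ℝ) (v : E → ℝ) : Prop :=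
  ∀ x, 0 < v x → θ * infDist x (frontier {y | 0 < v y}) ≤ v x

def IsStronglyNondegenerate (θ : ℝ) (w : E → ℝ) : Prop :=
  ∀ x₀ ∈ frontier {y | 0 < w y}, ∀ r > (0 : ℝ), θ * r ≤ sSup (w '' closedBall x₀ r)

variable {v w : E → ℝ} {θ ε : ℝ} {x₀ : E}

theorem exists_nonpos_near_of_mem_frontier_pos (hx₀ : x₀ ∈ frontier {y | 0 < w y}) {r : ℝ}
    (hr : 0 < r) : ∃ y ∈ ball x₀ r, w y ≤ 0 := by
  rw [← frontier_compl] at hx₀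
  obtain ⟨y, hy, hxy⟩ := mem_closure_iff.mp (frontier_subset_closure hx₀) r hr
  exact ⟨y, mem_ball'.mpr hxy, not_lt.mp hy⟩

theorem not_ball_subset_pos (hlin : HasLinearGrowth θ v) (hθ : 0 < θ) (hε : 0 < ε)
    (hclose : ∀ x, |v x - w x| ≤ θ * ε / 2) (hx₀ : x₀ ∈ frontier {y | 0 < w y})
    (hfar : ε ≤ infDist x₀ (frontier {y | 0 < v y})) :
    ¬ ball x₀ ε ⊆ {y | 0 < v y} := by
  intro hball
  obtain ⟨y, hy, hwy⟩ := exists_nonpos_near_of_mem_frontier_pos hx₀ (half_pos hε)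
  have hvy : 0 < v y := hball (ball_subset_ball (half_le_self hε.le) hy)
  have hdist : ε / 2 < infDist y (frontier {y | 0 < v y}) := by
    have := infDist_le_infDist_add_dist (x := x₀) (y := y) (s := frontier {y | 0 < v y})
    rw [mem_ball'] at hy
    linarith
  have hgrowth : θ * (ε / 2) < v y := (mul_lt_mul_of_pos_left hdist hθ).trans_le (hlin y hvy)
  have := (abs_le.mp (hclose y)).2
  linarith

theorem not_ball_subset_nonpos (hnd : IsStronglyNondegenerate θ w) (hθ : 0 < θ) (hε : 0 < ε)
    (hclose : ∀ x, |v x - w x| ≤ θ * ε / 2) (hx₀ : x₀ ∈ frontier {y | 0 < w y}) :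
    ¬ ball x₀ ε ⊆ {y | 0 < v y}ᶜ := by
  intro hball
  have hsup : sSup (w '' closedBall x₀ (3 * ε / 4)) ≤ θ * ε / 2 := by
    refine Real.sSup_le ?_ (by positivity)
    rintro _ ⟨y, hy, rfl⟩
    have hvy : v y ≤ 0 := not_lt.mp (hball (closedBall_subset_ball (by linarith) hy))
    have := (abs_le.mp (hclose y)).1
    linarith
  have := hnd x₀ hx₀ (3 * ε / 4) (by positivity)
  nlinarith

end FreeBoundary

theorem frontier_pos_subset_infDist_lt {E : Type*} [NormedAddCommGroup E] [NormedSpace ℝ E]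
    {v w : E → ℝ} {θ ε : ℝ} (hlin : HasLinearGrowth θ v) (hnd : IsStronglyNondegenerate θ w)
    (hθ : 0 < θ) (hε : 0 < ε) (hclose : ∀ x, |v x - w x| ≤ θ * ε / 2) :
    frontier {y | 0 < w y} ⊆ {x | infDist x (frontier {y | 0 < v y}) < ε} := by
  intro x₀ hx₀
  by_contra hnear
  have hfar : ε ≤ infDist x₀ (frontier {y | 0 < v y}) := not_lt.mp hnear
  have hdisj : Disjoint (ball x₀ ε) (frontier {y | 0 < v y}) :=
    Set.disjoint_left.mpr fun x hx hxF =>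
      (infDist_le_dist_of_mem hxF).trans_lt (mem_ball'.mp hx) |>.not_ge hfar
  rcases isPreconnected_ball.subset_or_subset_compl_of_disjoint_frontier hdisj with hpos | hnonpos
  · exact not_ball_subset_pos hlin hθ hε hclose hx₀ hfar hpos
  · exact not_ball_subset_nonpos hnd hθ hε hclose hx₀ hnonpos

theorem free_boundaries_converge_general
    (n : ℕ) (u : EuclideanSpace ℝ (Fin n) → ℝ)
    (uk : ℕ → EuclideanSpace ℝ (Fin n) → ℝ)
    (hconv : TendstoUniformly uk u atTop)
    (θ : ℝ) (hθ : 0 < θ)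
    (hlin : ∀ x, 0 < u x → θ * infDist x (frontier {y | 0 < u y}) ≤ u x)
    (hlink : ∀ k x, 0 < uk k x → θ * infDist x (frontier {y | 0 < uk k y}) ≤ uk k x)
    (hnd : ∀ x₀ ∈ frontier {y | 0 < u y}, ∀ r > (0 : ℝ),
      θ * r ≤ sSup (u '' closedBall x₀ r))
    (hndk : ∀ k, ∀ x₀ ∈ frontier {y | 0 < uk k y}, ∀ r > (0 : ℝ),
      θ * r ≤ sSup (uk k '' closedBall x₀ r)) :
    ∀ ε > (0 : ℝ), ∃ N : ℕ, ∀ k ≥ N,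
      frontier {y | 0 < uk k y} ⊆ {x | infDist x (frontier {y | 0 < u y}) < ε} ∧
      frontier {y | 0 < u y} ⊆ {x | infDist x (frontier {y | 0 < uk k y}) < ε} := by
  intro ε hε
  obtain ⟨N, hN⟩ :=
    (tendstoUniformly_iff.mp hconv (θ * ε / 2) (by positivity)).exists_forall_of_atTop
  refine ⟨N, fun k hk => ⟨?_, ?_⟩⟩
  · exact frontier_pos_subset_infDist_lt hlin (hndk k) hθ hε fun x => (hN k hk x).le
  · refine frontier_pos_subset_infDist_lt (hlink k) hnd hθ hε fun x => ?_
    rw [abs_sub_comm]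
    exact (hN k hk x).le

/-- Hausdorff convergence of the free boundaries. -/
theorem free_boundaries_converge
    (n : ℕ) (u : EuclideanSpace ℝ (Fin n) → ℝ)
    (uk : ℕ → EuclideanSpace ℝ (Fin n) → ℝ)
    (hu : Continuous u) (huk : ∀ k, Continuous (uk k))
    (hu0 : ∀ x, 0 ≤ u x) (huk0 : ∀ k x, 0 ≤ uk k x)
    (hconv : TendstoUniformly uk u atTop)
    (θ : ℝ) (hθ : 0 < θ)
    (hfb : (frontier {x | 0 < u x}).Nonempty)
    (hfbk : ∀ k, (frontier {x | 0 < uk k x}).Nonempty)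
    (hlin : ∀ x, 0 < u x → θ * infDist x (frontier {y | 0 < u y}) ≤ u x)
    (hlink : ∀ k x, 0 < uk k x → θ * infDist x (frontier {y | 0 < uk k y}) ≤ uk k x)
    (hnd : ∀ x₀ ∈ frontier {y | 0 < u y}, ∀ r > (0 : ℝ),
      θ * r ≤ sSup (u '' closedBall x₀ r))
    (hndk : ∀ k, ∀ x₀ ∈ frontier {y | 0 < uk k y}, ∀ r > (0 : ℝ),
      θ * r ≤ sSup (uk k '' closedBall x₀ r)) :
    ∀ ε > (0 : ℝ), ∃ N : ℕ, ∀ k ≥ N,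
      frontier {y | 0 < uk k y} ⊆ {x | infDist x (frontier {y | 0 < u y}) < ε} ∧
      frontier {y | 0 < u y} ⊆ {x | infDist x (frontier {y | 0 < uk k y}) < ε} :=
  free_boundaries_converge_general n u uk hconv θ hθ hlin hlink hnd hndk
end

section
/- Let u and (u_k)_{k∈ℕ} be continuous nonnegative functions on ℝⁿ with u_k → u uniformly on ℝⁿ, and let θ > 0. Assume ∂{u>0} is nonempty, that u has linear growth away from the free boundary with constant θ, and that every u_k is strongly non-degenerate with constant θ. Then for every ε > 0 there exists N such that ∂{u_k>0} ⊆ Γ_ε(∂{u>0}) for all k ≥ N. -/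
/-!
Let `x₀` be a free boundary point of `u_k` with `dist(x₀, ∂{u>0}) ≥ 2r` while `|u_k - u| < θr/2`.
The ball `B_{2r}(x₀)` misses `∂{u>0}`, so, being connected, it lies either in the interior of
`{u>0}` or outside its closure. In the first case linear growth gives `u ≥ θr` on `B_r(x₀)`, so
`u_k > 0` there and `x₀` is an interior point of `{u_k>0}`. In the second case `u_k < θr/2` on
`B_r(x₀)`, contradicting non-degeneracy of `u_k` at `x₀`.
-/

open Metric MeasureTheory Filter

theorem IsPreconnected.subset_interior_or_subset_compl_closure {X : Type*} [TopologicalSpace X]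
    {s t : Set X} (hs : IsPreconnected s) (h : Disjoint s (frontier t)) :
    s ⊆ interior t ∨ s ⊆ (closure t)ᶜ := by
  refine hs.subset_or_subset isOpen_interior isClosed_closure.isOpen_compl
    (disjoint_compl_right.mono_left interior_subset_closure) fun x hx => ?_
  have hx : x ∉ frontier t := h.notMem_of_mem_left hx
  simp only [frontier, Set.mem_sdiff, not_and_or, not_not] at hx
  exact hx.symm

section FreeBoundary

variable {X : Type*} [PseudoMetricSpace X] {f g : X → ℝ} {θ r : ℝ} {x₀ : X}

theorem ball_subset_pos_of_linear_growth (hθ : 0 ≤ θ)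
    (hlin : ∀ x, 0 < g x → θ * infDist x (frontier {y | 0 < g y}) ≤ g x)
    (hpos : ball x₀ r ⊆ {y | 0 < g y}) (hfar : 2 * r ≤ infDist x₀ (frontier {y | 0 < g y}))
    (hfg : ∀ z, dist (g z) (f z) < θ * r) :
    ball x₀ r ⊆ {y | 0 < f y} := by
  intro z hz
  have hdist : r ≤ infDist z (frontier {y | 0 < g y}) := by
    have := infDist_le_infDist_add_dist (x := x₀) (y := z) (s := frontier {y | 0 < g y})
    rw [dist_comm] at this
    linarith [mem_ball.1 hz]
  have hgz : θ * r ≤ g z := (mul_le_mul_of_nonneg_left hdist hθ).trans (hlin z (hpos hz))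
  have hfgz := hfg z
  rw [Real.dist_eq, abs_lt] at hfgz
  show 0 < f z
  linarith

theorem exists_pos_of_le_sSup_image_closedBall (hr : 0 ≤ r) (hθr : 0 < θ * r)
    (hnd : θ * r ≤ sSup (f '' closedBall x₀ r)) (hfg : ∀ z, dist (g z) (f z) < θ * r / 2) :
    ∃ y ∈ closedBall x₀ r, 0 < g y := by
  obtain ⟨_, ⟨y, hy, rfl⟩, hfy⟩ :=
    exists_lt_of_lt_csSup ((nonempty_closedBall.2 hr).image f) (by linarith : θ * r / 2 < sSup (f '' closedBall x₀ r))
  have hfgy := hfg y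
  rw [Real.dist_eq, abs_lt] at hfgy
  exact ⟨y, hy, by linarith⟩

end FreeBoundary

theorem infDist_frontier_lt_of_mem_frontier {E : Type*} [NormedAddCommGroup E]
    [NormedSpace ℝ E] {f g : E → ℝ} {θ r : ℝ} {x₀ : E} (hθ : 0 < θ) (hr : 0 < r)
    (hlin : ∀ x, 0 < g x → θ * infDist x (frontier {y | 0 < g y}) ≤ g x)
    (hx₀ : x₀ ∈ frontier {y | 0 < f y}) (hnd : θ * r ≤ sSup (f '' closedBall x₀ r))
    (hfg : ∀ z, dist (g z) (f z) < θ * r / 2) :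
    infDist x₀ (frontier {y | 0 < g y}) < 2 * r := by
  by_contra! hfar
  have hdisj : Disjoint (ball x₀ (2 * r)) (frontier {y | 0 < g y}) :=
    disjoint_ball_infDist.mono_left (ball_subset_ball hfar)
  have hθr : 0 < θ * r := mul_pos hθ hr
  rcases isPreconnected_ball.subset_interior_or_subset_compl_closure hdisj with hpos | hneg
  · have hball : ball x₀ r ⊆ {y | 0 < f y} :=
      ball_subset_pos_of_linear_growth hθ.le hlin
        (fun z hz => interior_subset (hpos (ball_subset_ball (by linarith) hz))) hfar
        (fun z => (hfg z).trans (half_lt_self hθr))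
    exact hx₀.2 (mem_interior_iff_mem_nhds.2 (mem_of_superset (ball_mem_nhds x₀ hr) hball))
  · obtain ⟨y, hy, hgy⟩ := exists_pos_of_le_sSup_image_closedBall hr.le hθr hnd hfg
    exact hneg (closedBall_subset_ball (by linarith) hy) (subset_closure hgy)

theorem free_boundary_inclusion_one_general
    (n : ℕ) (u : EuclideanSpace ℝ (Fin n) → ℝ)
    (uk : ℕ → EuclideanSpace ℝ (Fin n) → ℝ)
    (hconv : TendstoUniformly uk u atTop)
    (θ : ℝ) (hθ : 0 < θ)
    (hlin : ∀ x, 0 < u x → θ * infDist x (frontier {y | 0 < u y}) ≤ u x)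
    (hndk : ∀ k, ∀ x₀ ∈ frontier {y | 0 < uk k y}, ∀ r > (0 : ℝ),
      θ * r ≤ sSup (uk k '' closedBall x₀ r)) :
    ∀ ε > (0 : ℝ), ∃ N : ℕ, ∀ k ≥ N,
      frontier {y | 0 < uk k y} ⊆ {x | infDist x (frontier {y | 0 < u y}) < ε} := by
  intro ε hε
  have hr : 0 < ε / 2 := half_pos hε
  obtain ⟨N, hN⟩ :=
    eventually_atTop.1 (tendstoUniformly_iff.1 hconv (θ * (ε / 2) / 2) (by positivity))
  refine ⟨N, fun k hk x₀ hx₀ => ?_⟩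
  have h := infDist_frontier_lt_of_mem_frontier hθ hr hlin hx₀ (hndk k x₀ hx₀ _ hr) (hN k hk)
  rwa [mul_div_cancel₀ ε two_ne_zero] at h

/-- one inclusion of the Hausdorff convergence of free boundaries. -/
theorem free_boundary_inclusion_one
    (n : ℕ) (u : EuclideanSpace ℝ (Fin n) → ℝ)
    (uk : ℕ → EuclideanSpace ℝ (Fin n) → ℝ)
    (hu : Continuous u) (huk : ∀ k, Continuous (uk k))
    (hu0 : ∀ x, 0 ≤ u x) (huk0 : ∀ k x, 0 ≤ uk k x)
    (hconv : TendstoUniformly uk u atTop)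
    (θ : ℝ) (hθ : 0 < θ)
    (hfb : (frontier {x | 0 < u x}).Nonempty)
    (hlin : ∀ x, 0 < u x → θ * infDist x (frontier {y | 0 < u y}) ≤ u x)
    (hndk : ∀ k, ∀ x₀ ∈ frontier {y | 0 < uk k y}, ∀ r > (0 : ℝ),
      θ * r ≤ sSup (uk k '' closedBall x₀ r)) :
    ∀ ε > (0 : ℝ), ∃ N : ℕ, ∀ k ≥ N,
      frontier {y | 0 < uk k y} ⊆ {x | infDist x (frontier {y | 0 < u y}) < ε} :=
  free_boundary_inclusion_one_general n u uk hconv θ hθ hlin hndk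
end

section
/- Let u and (u_k)_{k∈ℕ} be continuous nonnegative functions on ℝⁿ with u_k → u uniformly on ℝⁿ, and let θ > 0. Assume every ∂{u_k>0} is nonempty, that every u_k has linear growth away from the free boundary with constant θ, and that u is strongly non-degenerate with constant θ. Then for every ε > 0 there exists N such that ∂{u>0} ⊆ Γ_ε(∂{u_k>0}) for all k ≥ N. -/
/-!
Fix `ε > 0` and take `k` so large that `|u - u_k| < θε/4` everywhere. Let `x₀` be a free boundary
point of `u`, so `u x₀ = 0`. If `u_k x₀ > 0`, linear growth of `u_k` gives
`θ · dist(x₀, ∂{u_k>0}) ≤ u_k x₀ < θε/4`. Otherwise, non-degeneracy of `u` yields `z` with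
`|z - x₀| ≤ ε/2` and `u z > θε/4`, hence `u_k z > 0`; the segment from `x₀` to `z` then crosses
`∂{u_k>0}` within distance `ε/2` of `x₀`.
-/

open Metric Filter Set

theorem IsPreconnected.inter_frontier_nonempty {X : Type*} [TopologicalSpace X] {s t : Set X}
    (hs : IsPreconnected s) (hin : (s ∩ t).Nonempty) (hout : (s \ t).Nonempty) :
    (s ∩ frontier t).Nonempty := by
  by_contra h
  have hcover : s ⊆ interior t ∪ interior tᶜ := by
    rw [← compl_frontier_eq_union_interior]
    exact fun x hx hxf => h ⟨x, hx, hxf⟩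
  obtain ⟨b, hbs, hbt⟩ := hin
  obtain ⟨a, has, hat⟩ := hout
  have hb : b ∈ interior t := (hcover hbs).resolve_right fun hb => interior_subset hb hbt
  have ha : a ∈ interior tᶜ := (hcover has).resolve_left fun ha => hat (interior_subset ha)
  obtain ⟨x, -, hxt, hxc⟩ :=
    hs _ _ isOpen_interior isOpen_interior hcover ⟨b, hbs, hb⟩ ⟨a, has, ha⟩
  exact interior_subset hxc (interior_subset hxt)

theorem infDist_frontier_le_of_mem_closedBall {E : Type*} [NormedAddCommGroup E]
    [NormedSpace ℝ E] {t : Set E} {x z : E} {r : ℝ} (hx : x ∉ t) (hz : z ∈ t)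
    (hzr : z ∈ closedBall x r) :
    infDist x (frontier t) ≤ r := by
  obtain ⟨w, hw, hwt⟩ := (convex_segment x z).isPreconnected.inter_frontier_nonempty
    ⟨z, right_mem_segment ℝ x z, hz⟩ ⟨x, left_mem_segment ℝ x z, hx⟩
  have hwr : w ∈ closedBall x r := (convex_closedBall x r).segment_subset
    (mem_closedBall_self (dist_nonneg.trans hzr)) hzr hw
  calc infDist x (frontier t) ≤ dist x w := infDist_le_dist_of_mem hwt
    _ = dist w x := dist_comm x w
    _ ≤ r := hwr

theorem infDist_frontier_pos_lt_of_forall_dist_lt {E : Type*} [NormedAddCommGroup E]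
    [NormedSpace ℝ E] {u v : E → ℝ} {θ ε : ℝ} {x₀ : E} (hθ : 0 < θ) (hε : 0 < ε)
    (hclose : ∀ x, dist (u x) (v x) < θ * ε / 4)
    (hlin : ∀ x, 0 < v x → θ * infDist x (frontier {y | 0 < v y}) ≤ v x)
    (hx₀ : u x₀ ≤ 0) (hnd : θ * (ε / 2) ≤ sSup (u '' closedBall x₀ (ε / 2))) :
    infDist x₀ (frontier {y | 0 < v y}) < ε := by
  have hθε : 0 < θ * ε := mul_pos hθ hε
  by_cases hpos : 0 < v x₀
  · have hvx₀ : v x₀ < θ * ε / 4 := by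
      linarith [(abs_sub_lt_iff.mp (Real.dist_eq _ _ ▸ hclose x₀)).2]
    refine lt_of_mul_lt_mul_left ?_ hθ.le
    linarith [hlin x₀ hpos]
  · obtain ⟨_, ⟨z, hz, rfl⟩, huz⟩ := exists_lt_of_lt_csSup
      ((nonempty_closedBall.mpr (half_pos hε).le).image u)
      (show θ * ε / 4 < sSup (u '' closedBall x₀ (ε / 2)) by linarith)
    have hvz : 0 < v z := by
      linarith [(abs_sub_lt_iff.mp (Real.dist_eq _ _ ▸ hclose z)).1]
    linarith [infDist_frontier_le_of_mem_closedBall (t := {y | 0 < v y}) hpos hvz hz]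

theorem free_boundary_inclusion_two_general
    (n : ℕ) (u : EuclideanSpace ℝ (Fin n) → ℝ)
    (uk : ℕ → EuclideanSpace ℝ (Fin n) → ℝ)
    (hu : Continuous u)
    (hconv : TendstoUniformly uk u atTop)
    (θ : ℝ) (hθ : 0 < θ)
    (hlink : ∀ k x, 0 < uk k x → θ * infDist x (frontier {y | 0 < uk k y}) ≤ uk k x)
    (hnd : ∀ x₀ ∈ frontier {y | 0 < u y}, ∀ r > (0 : ℝ),
      θ * r ≤ sSup (u '' closedBall x₀ r)) :
    ∀ ε > (0 : ℝ), ∃ N : ℕ, ∀ k ≥ N,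
      frontier {y | 0 < u y} ⊆ {x | infDist x (frontier {y | 0 < uk k y}) < ε} := by
  intro ε hε
  obtain ⟨N, hN⟩ := eventually_atTop.mp
    (Metric.tendstoUniformly_iff.mp hconv _ (by positivity : 0 < θ * ε / 4))
  refine ⟨N, fun k hk x₀ hx₀ => ?_⟩
  have hux₀ : u x₀ = 0 := (frontier_lt_subset_eq continuous_const hu hx₀).symm
  exact infDist_frontier_pos_lt_of_forall_dist_lt hθ hε (hN k hk) (hlink k) hux₀.le
    (hnd x₀ hx₀ _ (half_pos hε))

/-- the other inclusion of the Hausdorff convergence of free boundaries. -/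
theorem free_boundary_inclusion_two
    (n : ℕ) (u : EuclideanSpace ℝ (Fin n) → ℝ)
    (uk : ℕ → EuclideanSpace ℝ (Fin n) → ℝ)
    (hu : Continuous u) (huk : ∀ k, Continuous (uk k))
    (hu0 : ∀ x, 0 ≤ u x) (huk0 : ∀ k x, 0 ≤ uk k x)
    (hconv : TendstoUniformly uk u atTop)
    (θ : ℝ) (hθ : 0 < θ)
    (hfbk : ∀ k, (frontier {x | 0 < uk k x}).Nonempty)
    (hlink : ∀ k x, 0 < uk k x → θ * infDist x (frontier {y | 0 < uk k y}) ≤ uk k x)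
    (hnd : ∀ x₀ ∈ frontier {y | 0 < u y}, ∀ r > (0 : ℝ),
      θ * r ≤ sSup (u '' closedBall x₀ r)) :
    ∀ ε > (0 : ℝ), ∃ N : ℕ, ∀ k ≥ N,
      frontier {y | 0 < u y} ⊆ {x | infDist x (frontier {y | 0 < uk k y}) < ε} :=
  free_boundary_inclusion_two_general n u uk hu hconv θ hθ hlink hnd
end

section
/- Let (p_k)_{k∈ℕ} be a sequence of reals with p_k > 2 and p_k → ∞, and let (u_k)_{k∈ℕ} be continuous functions on ℝⁿ, each a viscosity supersolution of the p_k-Laplace equation in the following sense: for every C² function ψ : ℝⁿ → ℝ and every point x at which u_k − ψ attains a local minimum and at which ∇ψ(x) ≠ 0, one has (p_k − 2)‖∇ψ(x)‖^{p_k−4} Δ_∞ψ(x) + ‖∇ψ(x)‖^{p_k−2} Δψ(x) ≤ 0. If u_k → u uniformly on ℝⁿ, then u is a viscosity supersolution of Δ_∞u = 0: for every C² function ψ : ℝⁿ → ℝ and every point x₀ at which u − ψ attains a local minimum, Δ_∞ψ(x₀) ≤ 0. -/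
open Filter

/-- The infinity-Laplacian `Δ_∞ψ(x) = ⟨D²ψ(x) ∇ψ(x), ∇ψ(x)⟩` of `ψ` at `x`,
where the Hessian is `D²ψ(x) = D(∇ψ)(x)`. -/
noncomputable def infLap (n : ℕ) (ψ : EuclideanSpace ℝ (Fin n) → ℝ)
    (x : EuclideanSpace ℝ (Fin n)) : ℝ :=
  inner ℝ (fderiv ℝ (gradient ψ) x (gradient ψ x)) (gradient ψ x)

/-- The Laplacian `Δψ(x)`, i.e. the trace of the Hessian `D²ψ(x)`. -/
noncomputable def lap (n : ℕ) (ψ : EuclideanSpace ℝ (Fin n) → ℝ)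
    (x : EuclideanSpace ℝ (Fin n)) : ℝ :=
  ∑ i : Fin n, inner ℝ (fderiv ℝ (gradient ψ) x (EuclideanSpace.single i (1 : ℝ)))
    (EuclideanSpace.single i (1 : ℝ))

/-! The test function `φ y = ψ y - ‖y - x₀‖ ^ 4` has the same gradient and Hessian as `ψ` at
`x₀`, but `x₀` is a strict minimum of `u - φ`, with a gap of `ε ^ 4` at distance `ε`. By uniform
convergence, minimum points `x_k` of `u_k - φ` on a small closed ball then converge to `x₀`, so
they are eventually interior local minima. When `∇ψ(x₀) ≠ 0`, dividing the `p_k`-supersolution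
inequality at `x_k` by `(p_k - 2) ‖∇φ(x_k)‖ ^ (p_k - 4)` gives
`Δ_∞φ(x_k) ≤ -‖∇φ(x_k)‖² Δφ(x_k) / (p_k - 2)`, whose right-hand side tends to `0`. -/

open InnerProductSpace Metric Topology

section QuarticPerturbation

variable {E : Type*} [NormedAddCommGroup E] [InnerProductSpace ℝ E]

theorem contDiff_norm_sub_pow_four {n : WithTop ℕ∞} (x₀ : E) :
    ContDiff ℝ n fun y : E => ‖y - x₀‖ ^ 4 := by
  simpa only [Function.comp_def, id, ← pow_mul] using
    ((contDiff_norm_sq ℝ).pow 2).comp ((contDiff_id (𝕜 := ℝ)).sub (contDiff_const (c := x₀)))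

variable [CompleteSpace E]

theorem ContDiff.gradient {ψ : E → ℝ} {m n : WithTop ℕ∞} (hψ : ContDiff ℝ n ψ)
    (hmn : m + 1 ≤ n) : ContDiff ℝ m (gradient ψ) :=
  (toDual ℝ E).symm.contDiff.comp (hψ.fderiv_right hmn)

theorem hasGradientAt_norm_sub_pow_four (x₀ y : E) :
    HasGradientAt (fun y => ‖y - x₀‖ ^ 4) ((4 * ‖y - x₀‖ ^ 2) • (y - x₀)) y := by
  rw [hasGradientAt_iff_hasFDerivAt]
  have h := (((hasFDerivAt_id y).sub_const x₀).norm_sq).pow 2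
  simp only [← pow_mul] at h
  refine h.congr_fderiv ?_
  ext v
  simp
  ring

theorem hasFDerivAt_gradient_norm_sub_pow_four_self (x₀ : E) :
    HasFDerivAt (gradient fun y => ‖y - x₀‖ ^ 4) (0 : E →L[ℝ] E) x₀ := by
  rw [gradient_eq fun y => hasGradientAt_norm_sub_pow_four x₀ y]
  have h := ((((hasFDerivAt_id x₀).sub_const x₀).norm_sq).const_mul 4).smul
    ((hasFDerivAt_id x₀).sub_const x₀)
  refine h.congr_fderiv ?_
  ext v
  simp

theorem gradient_fun_sub {f g : E → ℝ} {y : E} (hf : DifferentiableAt ℝ f y)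
    (hg : DifferentiableAt ℝ g y) :
    gradient (fun y => f y - g y) y = gradient f y - gradient g y := by
  simp [gradient, fderiv_fun_sub hf hg]

theorem fderiv_gradient_sub_norm_sub_pow_four_self {ψ : E → ℝ} (x₀ : E)
    (hψ : Differentiable ℝ ψ) (hψ' : DifferentiableAt ℝ (gradient ψ) x₀) :
    fderiv ℝ (gradient fun y => ψ y - ‖y - x₀‖ ^ 4) x₀ = fderiv ℝ (gradient ψ) x₀ := by
  have hgrad : (gradient fun y => ψ y - ‖y - x₀‖ ^ 4)
      = fun y => gradient ψ y - gradient (fun y => ‖y - x₀‖ ^ 4) y :=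
    funext fun y => gradient_fun_sub (hψ y) (hasGradientAt_norm_sub_pow_four x₀ y).differentiableAt
  rw [hgrad]
  simpa using (hψ'.hasFDerivAt.fun_sub (hasFDerivAt_gradient_norm_sub_pow_four_self x₀)).fderiv

theorem gradient_sub_norm_sub_pow_four_self {ψ : E → ℝ} (x₀ : E)
    (hψ : DifferentiableAt ℝ ψ x₀) :
    gradient (fun y => ψ y - ‖y - x₀‖ ^ 4) x₀ = gradient ψ x₀ := by
  rw [gradient_fun_sub hψ (hasGradientAt_norm_sub_pow_four x₀ x₀).differentiableAt,
    (hasGradientAt_norm_sub_pow_four x₀ x₀).gradient]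
  simp

end QuarticPerturbation

theorem tendsto_of_isMinOn_of_tendstoUniformlyOn {X ι : Type*} [PseudoMetricSpace X]
    {l : Filter ι} {F : ι → X → ℝ} {f : X → ℝ} {s : Set X} {x₀ : X} {x : ι → X}
    (hF : TendstoUniformlyOn F f l s) (hx₀ : x₀ ∈ s) (hx : ∀ i, x i ∈ s)
    (hmin : ∀ i, IsMinOn (F i) s (x i))
    (hstrict : ∀ ε > 0, ∃ δ > 0, ∀ y ∈ s, ε ≤ dist y x₀ → f x₀ + δ ≤ f y) :
    Tendsto x l (𝓝 x₀) := by
  rw [Metric.tendsto_nhds]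
  intro ε hε
  obtain ⟨δ, hδ, hfδ⟩ := hstrict ε hε
  filter_upwards [Metric.tendstoUniformlyOn_iff.mp hF (δ / 2) (half_pos hδ)] with i hi
  by_contra! hfar
  have hxi := hi (x i) (hx i)
  have hx₀i := hi x₀ hx₀
  rw [Real.dist_eq, abs_lt] at hxi hx₀i
  have hFmin : F i (x i) ≤ F i x₀ := hmin i hx₀
  linarith [hfδ (x i) (hx i) hfar]

theorem exists_tendsto_isLocalMin_sub_norm_sub_pow_four {E ι : Type*} [NormedAddCommGroup E]
    [ProperSpace E] {l : Filter ι} {u ψ : E → ℝ} {v : ι → E → ℝ} (hv : ∀ i, Continuous (v i))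
    (hψ : Continuous ψ) (hconv : TendstoUniformly v u l) {x₀ : E}
    (hmin : IsLocalMin (fun y => u y - ψ y) x₀) :
    ∃ x : ι → E, Tendsto x l (𝓝 x₀) ∧
      ∀ᶠ i in l, IsLocalMin (fun y => v i y - (ψ y - ‖y - x₀‖ ^ 4)) (x i) := by
  set φ := fun y => ψ y - ‖y - x₀‖ ^ 4
  obtain ⟨r, hr, hball⟩ := Metric.eventually_nhds_iff_ball.mp hmin
  have hstrict : ∀ ε > 0, ∃ δ > 0, ∀ y ∈ closedBall x₀ (r / 2), ε ≤ dist y x₀ →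
      u x₀ - φ x₀ + δ ≤ u y - φ y := by
    refine fun ε hε => ⟨ε ^ 4, by positivity, fun y hy hεy => ?_⟩
    have hgap : ε ^ 4 ≤ ‖y - x₀‖ ^ 4 := pow_le_pow_left₀ hε.le (dist_eq_norm y x₀ ▸ hεy) 4
    have hmin_y := hball y (closedBall_subset_ball (half_lt_self hr) hy)
    simp only [φ, sub_self, norm_zero]
    linarith
  have hφ : Continuous φ := hψ.sub ((continuous_id.sub continuous_const).norm.pow 4)
  choose x hx hxmin using fun i => (isCompact_closedBall x₀ (r / 2)).exists_isMinOn
    (nonempty_closedBall.mpr (half_pos hr).le) ((hv i).sub hφ).continuousOn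
  have hconvφ : TendstoUniformly (fun i y => v i y - φ y) (fun y => u y - φ y) l :=
    Metric.tendstoUniformly_iff.mpr fun ε hε => by
      simpa only [dist_sub_right] using Metric.tendstoUniformly_iff.mp hconv ε hε
  have htend : Tendsto x l (𝓝 x₀) := tendsto_of_isMinOn_of_tendstoUniformlyOn
    hconvφ.tendstoUniformlyOn (mem_closedBall_self (half_pos hr).le) hx hxmin hstrict
  refine ⟨x, htend, (htend.eventually (ball_mem_nhds x₀ (half_pos hr))).mono fun i hi => ?_⟩
  exact (hxmin i).isLocalMin (closedBall_mem_nhds_of_mem hi)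

section PLaplace

variable {n : ℕ}

def IsPLapSupersolution (n : ℕ) (p : ℝ) (v : EuclideanSpace ℝ (Fin n) → ℝ) : Prop :=
  ∀ ψ : EuclideanSpace ℝ (Fin n) → ℝ, ContDiff ℝ 2 ψ →
    ∀ x, IsLocalMin (fun y => v y - ψ y) x → gradient ψ x ≠ 0 →
      (p - 2) * ‖gradient ψ x‖ ^ (p - 4) * infLap n ψ x
        + ‖gradient ψ x‖ ^ (p - 2) * lap n ψ x ≤ 0

theorem infLap_sub_norm_sub_pow_four {ψ : EuclideanSpace ℝ (Fin n) → ℝ}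
    (x₀ : EuclideanSpace ℝ (Fin n)) (hψ : Differentiable ℝ ψ)
    (hψ' : DifferentiableAt ℝ (gradient ψ) x₀) :
    infLap n (fun y => ψ y - ‖y - x₀‖ ^ 4) x₀ = infLap n ψ x₀ := by
  rw [infLap, infLap, fderiv_gradient_sub_norm_sub_pow_four_self x₀ hψ hψ',
    gradient_sub_norm_sub_pow_four_self x₀ (hψ x₀)]

theorem continuous_infLap {ψ : EuclideanSpace ℝ (Fin n) → ℝ} (hψ : ContDiff ℝ 2 ψ) :
    Continuous (infLap n ψ) := by
  have hgrad : ContDiff ℝ 1 (gradient ψ) := hψ.gradient (by norm_num)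
  exact ((hgrad.continuous_fderiv one_ne_zero).clm_apply hgrad.continuous).inner
    hgrad.continuous

theorem continuous_lap {ψ : EuclideanSpace ℝ (Fin n) → ℝ} (hψ : ContDiff ℝ 2 ψ) :
    Continuous (lap n ψ) :=
  continuous_finsetSum _ fun _ _ =>
    (((hψ.gradient (by norm_num)).continuous_fderiv one_ne_zero).clm_apply continuous_const).inner
      continuous_const

theorem le_neg_sq_mul_div_of_pLaplace_nonpos {A p I L : ℝ} (hA : 0 < A) (hp : 2 < p)
    (h : (p - 2) * A ^ (p - 4) * I + A ^ (p - 2) * L ≤ 0) :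
    I ≤ -(A ^ 2 * L) / (p - 2) := by
  have hsplit : A ^ (p - 2) = A ^ (p - 4) * A ^ 2 := by
    rw [← Real.rpow_two, ← Real.rpow_add hA]
    ring_nf
  rw [hsplit] at h
  have hfactor : A ^ (p - 4) * ((p - 2) * I + A ^ 2 * L) ≤ 0 := by linarith
  have hsum := nonpos_of_mul_nonpos_right hfactor (Real.rpow_pos_of_pos hA _)
  rw [le_div_iff₀ (by linarith)]
  linarith

theorem IsPLapSupersolution.infLap_le {p : ℝ} {v ψ : EuclideanSpace ℝ (Fin n) → ℝ}
    {x : EuclideanSpace ℝ (Fin n)} (hv : IsPLapSupersolution n p v) (hp : 2 < p)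
    (hψ : ContDiff ℝ 2 ψ) (hmin : IsLocalMin (fun y => v y - ψ y) x) (hgrad : gradient ψ x ≠ 0) :
    infLap n ψ x ≤ -(‖gradient ψ x‖ ^ 2 * lap n ψ x) / (p - 2) :=
  le_neg_sq_mul_div_of_pLaplace_nonpos (norm_pos_iff.mpr hgrad) hp (hv ψ hψ x hmin hgrad)

theorem infLap_nonpos_of_tendsto_isLocalMin {ι : Type*} {l : Filter ι} [l.NeBot] {p : ι → ℝ}
    (hp : Tendsto p l atTop) {v : ι → EuclideanSpace ℝ (Fin n) → ℝ}
    (hv : ∀ i, IsPLapSupersolution n (p i) (v i)) {φ : EuclideanSpace ℝ (Fin n) → ℝ}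
    (hφ : ContDiff ℝ 2 φ) {x₀ : EuclideanSpace ℝ (Fin n)} (hgrad : gradient φ x₀ ≠ 0)
    {x : ι → EuclideanSpace ℝ (Fin n)} (hx : Tendsto x l (𝓝 x₀))
    (hmin : ∀ᶠ i in l, IsLocalMin (fun y => v i y - φ y) (x i)) :
    infLap n φ x₀ ≤ 0 := by
  have hgrad_cont : Continuous (gradient φ) := (hφ.gradient (m := 1) (by norm_num)).continuous
  have hgrad_ev : ∀ᶠ i in l, gradient φ (x i) ≠ 0 :=
    ((hgrad_cont.tendsto x₀).comp hx).eventually_ne hgrad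
  have hbound : ∀ᶠ i in l,
      infLap n φ (x i) ≤ -(‖gradient φ (x i)‖ ^ 2 * lap n φ (x i)) / (p i - 2) := by
    filter_upwards [hmin, hgrad_ev, hp.eventually_gt_atTop 2] with i hmin_i hgrad_i hp_i
    exact (hv i).infLap_le hp_i hφ hmin_i hgrad_i
  have hlhs := ((continuous_infLap hφ).tendsto x₀).comp hx
  have hrhs : Tendsto (fun i => -(‖gradient φ (x i)‖ ^ 2 * lap n φ (x i)) / (p i - 2)) l (𝓝 0) :=
    Tendsto.div_atTop
      ((((hgrad_cont.norm.pow 2).mul (continuous_lap hφ)).neg.tendsto x₀).comp hx)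
      (tendsto_atTop_add_const_right _ _ hp)
  exact le_of_tendsto_of_tendsto hlhs hrhs hbound

end PLaplace

theorem limit_is_infinity_supersolution_general
    (n : ℕ) (p : ℕ → ℝ) (hp : Tendsto p atTop atTop)
    (u : EuclideanSpace ℝ (Fin n) → ℝ) (uk : ℕ → EuclideanSpace ℝ (Fin n) → ℝ)
    (huk : ∀ k, Continuous (uk k))
    (hsuper : ∀ k, ∀ ψ : EuclideanSpace ℝ (Fin n) → ℝ, ContDiff ℝ 2 ψ →
      ∀ x, IsLocalMin (fun y => uk k y - ψ y) x → gradient ψ x ≠ 0 →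
        (p k - 2) * ‖gradient ψ x‖ ^ (p k - 4) * infLap n ψ x
          + ‖gradient ψ x‖ ^ (p k - 2) * lap n ψ x ≤ 0)
    (hconv : TendstoUniformly uk u atTop) :
    ∀ ψ : EuclideanSpace ℝ (Fin n) → ℝ, ContDiff ℝ 2 ψ →
      ∀ x₀, IsLocalMin (fun y => u y - ψ y) x₀ → infLap n ψ x₀ ≤ 0 := by
  intro ψ hψ x₀ hmin
  by_cases hψ₀ : gradient ψ x₀ = 0
  · simp [infLap, hψ₀]
  have hψ₁ : Differentiable ℝ ψ := hψ.differentiable (by norm_num)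
  obtain ⟨x, htend, hloc⟩ :=
    exists_tendsto_isLocalMin_sub_norm_sub_pow_four huk hψ.continuous hconv hmin
  rw [← infLap_sub_norm_sub_pow_four x₀ hψ₁
    ((hψ.gradient (m := 1) (by norm_num)).differentiable one_ne_zero x₀)]
  exact infLap_nonpos_of_tendsto_isLocalMin hp hsuper (hψ.sub (contDiff_norm_sub_pow_four x₀))
    (by rwa [gradient_sub_norm_sub_pow_four_self x₀ (hψ₁ x₀)]) htend hloc

/-- a uniform limit of viscosity supersolutions of the `p_k`-Laplace
equations, `p_k → ∞`, is a viscosity supersolution of `Δ_∞ u = 0`. -/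
theorem limit_is_infinity_supersolution
    (n : ℕ) (p : ℕ → ℝ) (hp2 : ∀ k, 2 < p k) (hp : Tendsto p atTop atTop)
    (u : EuclideanSpace ℝ (Fin n) → ℝ) (uk : ℕ → EuclideanSpace ℝ (Fin n) → ℝ)
    (hu : Continuous u) (huk : ∀ k, Continuous (uk k))
    (hsuper : ∀ k, ∀ ψ : EuclideanSpace ℝ (Fin n) → ℝ, ContDiff ℝ 2 ψ →
      ∀ x, IsLocalMin (fun y => uk k y - ψ y) x → gradient ψ x ≠ 0 →
        (p k - 2) * ‖gradient ψ x‖ ^ (p k - 4) * infLap n ψ x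
          + ‖gradient ψ x‖ ^ (p k - 2) * lap n ψ x ≤ 0)
    (hconv : TendstoUniformly uk u atTop) :
    ∀ ψ : EuclideanSpace ℝ (Fin n) → ℝ, ContDiff ℝ 2 ψ →
      ∀ x₀, IsLocalMin (fun y => u y - ψ y) x₀ → infLap n ψ x₀ ≤ 0 :=
  limit_is_infinity_supersolution_general n p hp u uk huk hsuper hconv
end

section
/- Let φ : ℝⁿ → ℝ and u : ℝⁿ → ℝ be continuous, let (u_k)_{k∈ℕ} be continuous functions converging to u locally uniformly on ℝⁿ, let (σ_k)_{k∈ℕ} be positive reals with σ_k → 0, and let M > 0. Suppose that for every ε > 0, every compact set K ⊂ ℝⁿ, and every k, the Lebesgue measure of {x ∈ K : u_k(x) − φ(x) < −ε} is at most M·σ_k/ε. Then u ≥ φ on all of ℝⁿ. -/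
/-!
If `u x < φ x`, continuity gives a compact neighbourhood `K` of `x` on which `u - φ < -2ε`, and
`K` has positive measure. Uniform convergence on `K` makes `u_k - φ < -ε` on all of `K` for large
`k`, so the sets `{x ∈ K | u_k x - φ x < -ε}` are eventually all of `K`, contradicting the bound
`M σ_k / ε → 0` on their measure.
-/

open MeasureTheory Filter Topology

theorem nonneg_of_tendstoLocallyUniformly_of_tendsto_measure_lt_neg
    {X ι : Type*} [TopologicalSpace X] [LocallyCompactSpace X] [MeasurableSpace X]
    (μ : Measure X) [μ.IsOpenPosMeasure] {l : Filter ι} [l.NeBot]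
    {F : ι → X → ℝ} {f : X → ℝ}
    (hf : Continuous f) (hF : TendstoLocallyUniformly F f l)
    (hμ : ∀ ε > (0 : ℝ), ∀ K : Set X, IsCompact K →
      Tendsto (fun i => μ {x ∈ K | F i x < -ε}) l (𝓝 0))
    (x : X) : 0 ≤ f x := by
  by_contra! hx
  obtain ⟨ε, hε, hxε⟩ : ∃ ε > 0, f x < -(2 * ε) :=
    ⟨-f x / 3, by linarith, by linarith⟩
  obtain ⟨K, hK, hxK, hKU⟩ := exists_compact_subset (isOpen_lt hf continuous_const) hxε
  have hall : ∀ᶠ i in l, ∀ y ∈ K, F i y < -ε :=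
    (tendstoLocallyUniformly_iff_forall_isCompact.mp hF K hK).eventually_forall_lt
      (by linarith) fun y hy => (hKU hy).le
  have hKpos : 0 < μ K := μ.measure_pos_of_mem_nhds (mem_interior_iff_mem_nhds.mp hxK)
  have hsmall : ∀ᶠ i in l, μ {y ∈ K | F i y < -ε} < μ K :=
    (hμ ε hε K hK).eventually_lt_const hKpos
  obtain ⟨i, hi_all, hi_small⟩ := (hall.and hsmall).exists
  rw [Set.sep_eq_self_iff_mem_true.mpr hi_all] at hi_small
  exact hi_small.false

theorem limit_ge_obstacle_general
    (n : ℕ) (φ u : EuclideanSpace ℝ (Fin n) → ℝ)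
    (hφ : Continuous φ) (hu : Continuous u)
    (uk : ℕ → EuclideanSpace ℝ (Fin n) → ℝ)
    (hconv : TendstoLocallyUniformly uk u atTop)
    (σ : ℕ → ℝ) (hσ : Tendsto σ atTop (nhds 0))
    (M : ℝ)
    (hmeas : ∀ ε > (0 : ℝ), ∀ K : Set (EuclideanSpace ℝ (Fin n)), IsCompact K → ∀ k,
      volume {x ∈ K | uk k x - φ x < -ε} ≤ ENNReal.ofReal (M * σ k / ε)) :
    ∀ x, φ x ≤ u x := by
  have hdiff : TendstoLocallyUniformly (uk - fun _ => φ) (u - φ) atTop :=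
    hconv.sub (TendstoUniformly.tendstoLocallyUniformly fun _ hV =>
      .of_forall fun _ _ => refl_mem_uniformity hV)
  have hsmall : ∀ ε > (0 : ℝ), ∀ K : Set (EuclideanSpace ℝ (Fin n)), IsCompact K →
      Tendsto (fun k => volume {x ∈ K | uk k x - φ x < -ε}) atTop (𝓝 0) := by
    intro ε hε K hK
    have hbound : Tendsto (fun k => ENNReal.ofReal (M * σ k / ε)) atTop (𝓝 0) := by
      simpa using ENNReal.tendsto_ofReal ((hσ.const_mul M).div_const ε)
    exact tendsto_of_tendsto_of_tendsto_of_le_of_le tendsto_const_nhds hbound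
      (fun _ => zero_le) (hmeas ε hε K hK)
  exact fun x => sub_nonneg.mp
    (nonneg_of_tendstoLocallyUniformly_of_tendsto_measure_lt_neg volume (hu.sub hφ) hdiff hsmall x)

/-- if the sets where `u_k < φ − ε` have measure `O(σ_k)` on every
compact set, with `σ_k → 0`, then the locally uniform limit `u` lies above `φ`. -/
theorem limit_ge_obstacle
    (n : ℕ) (φ u : EuclideanSpace ℝ (Fin n) → ℝ)
    (hφ : Continuous φ) (hu : Continuous u)
    (uk : ℕ → EuclideanSpace ℝ (Fin n) → ℝ) (huk : ∀ k, Continuous (uk k))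
    (hconv : TendstoLocallyUniformly uk u atTop)
    (σ : ℕ → ℝ) (hσpos : ∀ k, 0 < σ k) (hσ : Tendsto σ atTop (nhds 0))
    (M : ℝ) (hM : 0 < M)
    (hmeas : ∀ ε > (0 : ℝ), ∀ K : Set (EuclideanSpace ℝ (Fin n)), IsCompact K → ∀ k,
      volume {x ∈ K | uk k x - φ x < -ε} ≤ ENNReal.ofReal (M * σ k / ε)) :
    ∀ x, φ x ≤ u x :=
  limit_ge_obstacle_general n φ u hφ hu uk hconv σ hσ M hmeas
end
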